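/- arXiv:2405.10990 — 2 statements merged into one kernel-verified Lean document; each statement's English description precedes it below -/
import Mathlib

section
/- Modulation covariance of the LCST: for u = (u_t, u̲) ∈ ℝ^{3,1}, L_A[e^{−e_t u_t t} f(x) e^{−i₃ x̲·u̲}](w) = L_A[f]((w_t + u_t)e_t + w̲ + b u̲) · e^{−(i₃/2) d (b u̲² + 2 w̲·u̲)}. -/
/-! The linear canonical space-time transform (LCST) for functions on space-time
ℝ^{3,1} = ℝ × ℝ³ with values in the space-time algebra Cℓ(3,1), here treated as a
(complete) normed real algebra `A` containing the commuting elements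
e_t and i₃ = e₁e₂e₃, both squaring to −1. -/

noncomputable section
open MeasureTheory Real Filter

/-- The spatial part ℝ³ of space-time. -/
abbrev Sp3 := Fin 3 → ℝ

/-- Space-time ℝ^{3,1}: a point x = (t, x̲). -/
abbrev ST31 := ℝ × Sp3

variable {A : Type*} [NormedRing A] [NormedAlgebra ℝ A]

/-- exp(θ u) = cos θ + u sin θ, for u with u² = −1. -/
def cexp (u : A) (θ : ℝ) : A := algebraMap ℝ A (Real.cos θ) + Real.sin θ • u

/-- The right LCST kernel
K_{i₃}^A(x̲,w̲) = (2πb)^{−3/2} e^{i₃((a/2b)x̲² + (d/2b)w̲² − x̲·w̲/b)}. -/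
def lcstKernel (i3 : A) (a b d : ℝ) (x w : Sp3) : A :=
  ((2 * π * b) ^ (-(3:ℝ)/2)) •
    cexp i3 (a / (2*b) * ∑ i, x i ^ 2 + d / (2*b) * ∑ i, w i ^ 2 - (∑ i, x i * w i) / b)

/-- The linear canonical space-time transform
L_A[f](w) = ∫_{ℝ^{3,1}} e^{−e_t w_t t} f(x) K_{i₃}^A(x̲,w̲) d⁴x. -/
def LCST (et i3 : A) (a b d : ℝ) (f : ST31 → A) (w : ST31) : A :=
  ∫ x : ST31, cexp et (-(w.1 * x.1)) * f x * lcstKernel i3 a b d x.2 w.2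

lemma cexp_mul (u : A) (hu : u * u = -1) (θ φ : ℝ) :
    cexp u θ * cexp u φ = cexp u (θ + φ) := by
  simp only [cexp, Real.cos_add, Real.sin_add]
  rw [add_mul, mul_add, mul_add]
  rw [Algebra.algebraMap_eq_smul_one, Algebra.algebraMap_eq_smul_one,
    Algebra.algebraMap_eq_smul_one]
  simp only [smul_mul_assoc, mul_smul_comm, one_mul, mul_one, hu, smul_smul, smul_neg]
  module

lemma cexp_zero (u : A) : cexp u 0 = 1 := by
  simp [cexp]

/-- Pull a right multiplication by an invertible constant out of a Bochner integral,
without an integrability hypothesis. -/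
lemma integral_mul_right_inv {α : Type*} [MeasurableSpace α] {μ : Measure α}
    [CompleteSpace A] (g : α → A) {r r' : A} (h1 : r * r' = 1) (h2 : r' * r = 1) :
    ∫ x, g x * r ∂μ = (∫ x, g x ∂μ) * r := by
  by_cases hg : Integrable g μ
  · have := ((ContinuousLinearMap.mul ℝ A).flip r).integral_comp_comm hg
    simpa using this
  · have hgr : ¬ Integrable (fun x => g x * r) μ := by
      intro h
      exact hg (by simpa [mul_assoc, h1] using h.mul_const r')
    rw [integral_undef hg, integral_undef hgr, zero_mul]

/-- modulation covariance of the LCST: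
L_A[e^{−e_t u_t t} f(x) e^{−i₃ x̲·u̲}](w)
  = L_A[f]((w_t + u_t)e_t + w̲ + b u̲) e^{−(i₃/2) d (b u̲² + 2 w̲·u̲)}. -/
theorem lcst_modulation [CompleteSpace A]
    (et i3 : A) (het : et * et = -1) (hi3 : i3 * i3 = -1) (hcomm : et * i3 = i3 * et)
    (a b c d : ℝ) (hA : a * d - b * c = 1) (hb : b ≠ 0)
    (f : ST31 → A) (hf : Integrable f) (ut : ℝ) (uv : Sp3) :
    ∀ wt : ℝ, ∀ wv : Sp3,
      LCST et i3 a b d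
          (fun x => cexp et (-(ut * x.1)) * f x * cexp i3 (-(∑ i, x.2 i * uv i))) (wt, wv) =
        LCST et i3 a b d f (wt + ut, wv + b • uv) *
          cexp i3 (-(d / 2) * (b * ∑ i, uv i ^ 2 + 2 * ∑ i, wv i * uv i)) := by
  intro wt wv
  set φ : ℝ := -(d / 2) * (b * ∑ i, uv i ^ 2 + 2 * ∑ i, wv i * uv i) with hφ
  have key : ∀ x : ST31,
      cexp et (-(wt * x.1)) *
        (cexp et (-(ut * x.1)) * f x * cexp i3 (-(∑ i, x.2 i * uv i))) *
          lcstKernel i3 a b d x.2 wv =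
      (cexp et (-((wt + ut) * x.1)) * f x * lcstKernel i3 a b d x.2 (wv + b • uv)) *
        cexp i3 φ := by
    intro x
    have ht : cexp et (-(wt * x.1)) * cexp et (-(ut * x.1)) =
        cexp et (-((wt + ut) * x.1)) := by
      rw [cexp_mul et het]; ring_nf
    have hangle : (-(∑ i, x.2 i * uv i) +
        (a / (2*b) * ∑ i, x.2 i ^ 2 + d / (2*b) * ∑ i, wv i ^ 2 -
          (∑ i, x.2 i * wv i) / b)) =
        ((a / (2*b) * ∑ i, x.2 i ^ 2 +
            d / (2*b) * ∑ i, (wv + b • uv) i ^ 2 -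
            (∑ i, x.2 i * (wv + b • uv) i) / b) + φ) := by
      simp only [hφ, Fin.sum_univ_three, Pi.add_apply, Pi.smul_apply, smul_eq_mul]
      field_simp
      ring
    calc cexp et (-(wt * x.1)) *
        (cexp et (-(ut * x.1)) * f x * cexp i3 (-(∑ i, x.2 i * uv i))) *
          lcstKernel i3 a b d x.2 wv
        = (cexp et (-(wt * x.1)) * cexp et (-(ut * x.1))) * f x *
            (((2 * π * b) ^ (-(3:ℝ)/2)) •
              (cexp i3 (-(∑ i, x.2 i * uv i)) *
                cexp i3 (a / (2*b) * ∑ i, x.2 i ^ 2 + d / (2*b) * ∑ i, wv i ^ 2 -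
                  (∑ i, x.2 i * wv i) / b))) := by
          simp only [lcstKernel, mul_smul_comm, smul_mul_assoc]
          congr 1
          simp only [mul_assoc]
      _ = cexp et (-((wt + ut) * x.1)) * f x *
            (((2 * π * b) ^ (-(3:ℝ)/2)) •
              (cexp i3 ((a / (2*b) * ∑ i, x.2 i ^ 2 +
                  d / (2*b) * ∑ i, (wv + b • uv) i ^ 2 -
                  (∑ i, x.2 i * (wv + b • uv) i) / b) + φ))) := by
          rw [ht, cexp_mul i3 hi3, hangle]
      _ = (cexp et (-((wt + ut) * x.1)) * f x * lcstKernel i3 a b d x.2 (wv + b • uv)) *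
            cexp i3 φ := by
          simp only [lcstKernel, ← cexp_mul i3 hi3, mul_smul_comm, smul_mul_assoc, mul_assoc]
  simp only [LCST]
  calc (∫ x : ST31, cexp et (-(wt * x.1)) *
        (cexp et (-(ut * x.1)) * f x * cexp i3 (-(∑ i, x.2 i * uv i))) *
          lcstKernel i3 a b d x.2 wv)
      = ∫ x : ST31, (cexp et (-((wt + ut) * x.1)) * f x *
          lcstKernel i3 a b d x.2 (wv + b • uv)) * cexp i3 φ := by
        exact integral_congr_ae (Filter.Eventually.of_forall key)
    _ = (∫ x : ST31, cexp et (-((wt + ut) * x.1)) * f x *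
          lcstKernel i3 a b d x.2 (wv + b • uv)) * cexp i3 φ := by
        apply integral_mul_right_inv
        · rw [cexp_mul i3 hi3, add_neg_cancel, cexp_zero]
        · rw [cexp_mul i3 hi3, neg_add_cancel, cexp_zero]
end
end

section
/- Spatial-derivative property of the LCST: for k ∈ {1,2,3}, if f and ∂f/∂x_k are in L¹(ℝ^{3,1}, Cℓ(3,1)) and f decays at infinity, then L_A[∂f/∂x_k](w) = [w_k L_A[f](w) − a·L_A[x_k f(x)](w)]·(i₃/b). -/
/-! The linear canonical space-time transform (LCST) for functions on space-time
ℝ^{3,1} = ℝ × ℝ³ with values in the space-time algebra Cℓ(3,1), here treated as a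
(complete) normed real algebra `A` containing the commuting elements
e_t and i₃ = e₁e₂e₃, both squaring to −1. -/

noncomputable section
open MeasureTheory Real Filter

variable {A : Type*} [NormedRing A] [NormedAlgebra ℝ A]

/-! Along the line through x in the direction x_k, the kernel satisfies
∂_k K = K · ((a x_k − w_k)/b) i₃, so the integrand φ = e^{−e_t w_t t} f K of L_A[f] has
∂_k φ = e^{−e_t w_t t} (∂_k f) K + e^{−e_t w_t t} ((a x_k − w_k) f) K (i₃/b).
The kernel and the time exponential are bounded, so φ is integrable and, like f, tends to 0 at
both ends of every such line. By Fubini and the fundamental theorem of calculus on each line,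
∫ ∂_k φ = 0, i.e. L_A[∂_k f] + L_A[(a x_k − w_k) f] (i₃/b) = 0, which is the claim by linearity. -/

open Function

section
variable {ι : Type*} [Fintype ι] [DecidableEq ι]

theorem sum_apply_update_eq_add {α M : Type*} [AddCommMonoid M] (g : ι → α → M) (v : ι → α)
    (k : ι) (s : α) :
    ∑ i, g i (update v k s i) = g k s + ∑ i ∈ {k}ᶜ, g i (v i) := by
  rw [Fintype.sum_eq_add_sum_compl k, update_self]
  congr 1
  refine Finset.sum_congr rfl fun i hi => ?_
  rw [update_of_ne (by simpa using hi)]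

theorem hasDerivAt_sum_update_sq (v : ι → ℝ) (k : ι) :
    HasDerivAt (fun s => ∑ i, update v k s i ^ 2) (2 * v k) (v k) := by
  simp_rw [sum_apply_update_eq_add (fun _ x => x ^ 2)]
  simpa using (hasDerivAt_pow 2 (v k)).add_const (∑ i ∈ {k}ᶜ, v i ^ 2)

theorem hasDerivAt_sum_update_mul (v w : ι → ℝ) (k : ι) (s₀ : ℝ) :
    HasDerivAt (fun s => ∑ i, update v k s i * w i) (w k) s₀ := by
  simp_rw [sum_apply_update_eq_add (fun i x => x * w i)]
  simpa using ((hasDerivAt_id s₀).mul_const (w k)).add_const (∑ i ∈ {k}ᶜ, v i * w i)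

end

theorem cexp_eq_smul (u : A) (θ : ℝ) : cexp u θ = Real.cos θ • (1 : A) + Real.sin θ • u := by
  rw [cexp, Algebra.algebraMap_eq_smul_one]

theorem norm_cexp_le (u : A) (θ : ℝ) : ‖cexp u θ‖ ≤ ‖(1 : A)‖ + ‖u‖ := by
  rw [cexp_eq_smul]
  refine (norm_add_le _ _).trans (add_le_add ?_ ?_) <;> rw [norm_smul] <;>
    exact mul_le_of_le_one_left (norm_nonneg _) (by simp [abs_cos_le_one, abs_sin_le_one])

theorem continuous_cexp (u : A) : Continuous (cexp u) := by
  unfold cexp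
  fun_prop

theorem hasDerivAt_cexp {u : A} (hu : u * u = -1) (θ : ℝ) :
    HasDerivAt (cexp u) (cexp u θ * u) θ := by
  have h := ((Real.hasDerivAt_cos θ).smul_const (1 : A)).add ((Real.hasDerivAt_sin θ).smul_const u)
  rw [show cexp u = fun θ => Real.cos θ • (1 : A) + Real.sin θ • u from funext (cexp_eq_smul u)]
  refine h.congr_deriv ?_
  rw [add_mul, smul_mul_assoc, smul_mul_assoc, one_mul, hu, smul_neg, neg_smul]
  abel

theorem continuous_lcstKernel (i3 : A) (a b d : ℝ) (w : Sp3) :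
    Continuous fun v => lcstKernel i3 a b d v w := by
  unfold lcstKernel
  have := continuous_cexp i3
  fun_prop

theorem norm_lcstKernel_le (i3 : A) (a b d : ℝ) (v w : Sp3) :
    ‖lcstKernel i3 a b d v w‖ ≤ |(2 * π * b) ^ (-(3:ℝ)/2)| * (‖(1 : A)‖ + ‖i3‖) := by
  rw [lcstKernel, norm_smul, Real.norm_eq_abs]
  exact mul_le_mul_of_nonneg_left (norm_cexp_le _ _) (abs_nonneg _)

theorem hasDerivAt_lcstKernel_update {i3 : A} (hi3 : i3 * i3 = -1) (a b d : ℝ) (v w : Sp3)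
    (k : Fin 3) :
    HasDerivAt (fun s => lcstKernel i3 a b d (update v k s) w)
      (lcstKernel i3 a b d v w * (((a * v k - w k) / b) • i3)) (v k) := by
  have hphase := (((hasDerivAt_sum_update_sq v k).const_mul (a / (2 * b))).add_const
    (d / (2 * b) * ∑ i, w i ^ 2)).sub ((hasDerivAt_sum_update_mul v w k (v k)).div_const b)
  have h := ((hasDerivAt_cexp hi3 _).scomp (v k) hphase).const_smul ((2 * π * b) ^ (-(3:ℝ)/2))
  unfold lcstKernel
  refine h.congr_deriv ?_
  simp only [Pi.sub_apply, update_eq_self]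
  rw [smul_mul_assoc, mul_smul_comm]
  congr 2
  ring

section
variable {E : Type*} [NormedAddCommGroup E] [NormedSpace ℝ E] [CompleteSpace E] {n : ℕ}

theorem integral_eq_zero_of_hasDerivAt_update (k : Fin (n + 1)) {φ g : (Fin (n + 1) → ℝ) → E}
    (hg : Integrable g) (hφ : ∀ v, HasDerivAt (fun s => φ (update v k s)) (g v) (v k))
    (hbot : ∀ v, Tendsto (fun s => φ (update v k s)) atBot (nhds 0))
    (htop : ∀ v, Tendsto (fun s => φ (update v k s)) atTop (nhds 0)) :
    ∫ v, g v = 0 := by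
  have hmp := (volume_preserving_piFinSuccAbove (fun _ : Fin (n + 1) => ℝ) k).symm
  have hsymm : ∀ p : ℝ × (Fin n → ℝ),
      (MeasurableEquiv.piFinSuccAbove (fun _ => ℝ) k).symm p = k.insertNth p.1 p.2 := fun _ => rfl
  have hline : ∀ (y : Fin n → ℝ) (s : ℝ),
      update (k.insertNth s y : Fin (n + 1) → ℝ) k =
        fun s' => (k.insertNth s' y : Fin (n + 1) → ℝ) :=
    fun y s => funext fun s' => Fin.update_insertNth (α := fun _ => ℝ) k s s' y
  have hg' : Integrable (fun p : ℝ × (Fin n → ℝ) => g (k.insertNth p.1 p.2)) (volume.prod volume) :=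
    (hmp.integrable_comp_emb (MeasurableEquiv.measurableEmbedding _)).2 hg
  rw [← hmp.integral_comp', Measure.volume_eq_prod]
  simp only [hsymm]
  rw [integral_prod_symm _ hg']
  refine integral_eq_zero_of_ae (hg'.prod_left_ae.mono fun y hy => ?_)
  have hderiv : ∀ s, HasDerivAt (fun s' => φ (k.insertNth s' y)) (g (k.insertNth s y)) s := by
    intro s
    simpa [hline] using hφ (k.insertNth s y)
  have hbot' := hbot (k.insertNth 0 y)
  have htop' := htop (k.insertNth 0 y)
  rw [hline] at hbot' htop'
  simpa using integral_of_hasDerivAt_of_tendsto hderiv hy hbot' htop'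

theorem integral_prod_eq_zero_of_hasDerivAt_update {X : Type*} [MeasurableSpace X]
    {μ : Measure X} [SFinite μ] (k : Fin (n + 1)) {φ g : X × (Fin (n + 1) → ℝ) → E}
    (hg : Integrable g (μ.prod volume))
    (hφ : ∀ x, HasDerivAt (fun s => φ (x.1, update x.2 k s)) (g x) (x.2 k))
    (hbot : ∀ t v, Tendsto (fun s => φ (t, update v k s)) atBot (nhds 0))
    (htop : ∀ t v, Tendsto (fun s => φ (t, update v k s)) atTop (nhds 0)) :
    ∫ x, g x ∂μ.prod volume = 0 := by
  rw [integral_prod _ hg]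
  exact integral_eq_zero_of_ae (hg.prod_right_ae.mono fun t ht =>
    integral_eq_zero_of_hasDerivAt_update (φ := fun v => φ (t, v)) k ht (fun v => hφ (t, v))
      (hbot t) (htop t))

end

section
variable (et i3 : A) (a b d : ℝ)

def lcstIntegrand (f : ST31 → A) (w x : ST31) : A :=
  cexp et (-(w.1 * x.1)) * f x * lcstKernel i3 a b d x.2 w.2

theorem LCST_eq_integral (f : ST31 → A) (w : ST31) :
    LCST et i3 a b d f w = ∫ x, lcstIntegrand et i3 a b d f w x := rfl

theorem norm_lcstIntegrand_le (f : ST31 → A) (w x : ST31) :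
    ‖lcstIntegrand et i3 a b d f w x‖ ≤
      (‖(1 : A)‖ + ‖et‖) * (|(2 * π * b) ^ (-(3:ℝ)/2)| * (‖(1 : A)‖ + ‖i3‖)) * ‖f x‖ := by
  calc ‖lcstIntegrand et i3 a b d f w x‖
      ≤ ‖cexp et (-(w.1 * x.1))‖ * ‖f x‖ * ‖lcstKernel i3 a b d x.2 w.2‖ := norm_mul₃_le
    _ ≤ (‖(1 : A)‖ + ‖et‖) * ‖f x‖ * (|(2 * π * b) ^ (-(3:ℝ)/2)| * (‖(1 : A)‖ + ‖i3‖)) := by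
      gcongr
      exacts [norm_cexp_le _ _, norm_lcstKernel_le _ _ _ _ _ _]
    _ = _ := by ring

theorem integrable_lcstIntegrand {f : ST31 → A} (hf : Integrable f) (w : ST31) :
    Integrable (lcstIntegrand et i3 a b d f w) := by
  refine (hf.norm.const_mul _).mono' ?_
    (Eventually.of_forall (norm_lcstIntegrand_le et i3 a b d f w))
  have hE : Continuous fun x : ST31 => cexp et (-(w.1 * x.1)) := by
    have := continuous_cexp et
    fun_prop
  have hK : Continuous fun x : ST31 => lcstKernel i3 a b d x.2 w.2 :=
    (continuous_lcstKernel i3 a b d w.2).comp continuous_snd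
  exact (hE.aestronglyMeasurable.mul hf.1).mul hK.aestronglyMeasurable

theorem tendsto_lcstIntegrand_update {f : ST31 → A} {l : Filter ℝ} (w : ST31) (t : ℝ) (v : Sp3)
    (k : Fin 3) (hf : Tendsto (fun s => f (t, update v k s)) l (nhds 0)) :
    Tendsto (fun s => lcstIntegrand et i3 a b d f w (t, update v k s)) l (nhds 0) := by
  refine squeeze_zero_norm (fun s => norm_lcstIntegrand_le et i3 a b d f w _) ?_
  simpa using hf.norm.const_mul _

theorem LCST_sub {f g : ST31 → A} (hf : Integrable f) (hg : Integrable g) (w : ST31) :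
    LCST et i3 a b d (f - g) w = LCST et i3 a b d f w - LCST et i3 a b d g w := by
  simp only [LCST_eq_integral]
  rw [← integral_sub (integrable_lcstIntegrand et i3 a b d hf w)
    (integrable_lcstIntegrand et i3 a b d hg w)]
  congr 1 with x
  simp [lcstIntegrand, sub_mul, mul_sub]

theorem LCST_smul (r : ℝ) (f : ST31 → A) (w : ST31) :
    LCST et i3 a b d (r • f) w = r • LCST et i3 a b d f w := by
  simp only [LCST_eq_integral, ← integral_smul]
  congr 1 with x
  simp [lcstIntegrand]

theorem hasDerivAt_lcstIntegrand_update (hi3 : i3 * i3 = -1) {f fk : ST31 → A}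
    (w x : ST31) (k : Fin 3)
    (hf : HasDerivAt (fun s => f (x.1, update x.2 k s)) (fk x) (x.2 k)) :
    HasDerivAt (fun s => lcstIntegrand et i3 a b d f w (x.1, update x.2 k s))
      (lcstIntegrand et i3 a b d fk w x +
        lcstIntegrand et i3 a b d (a • (fun y => y.2 k • f y) - w.2 k • f) w x * (b⁻¹ • i3))
      (x.2 k) := by
  have h := (hf.const_mul (cexp et (-(w.1 * x.1)))).mul
    (hasDerivAt_lcstKernel_update hi3 a b d x.2 w.2 k)
  simp only [update_eq_self] at h
  refine h.congr_deriv ?_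
  simp only [lcstIntegrand, Pi.sub_apply, Pi.smul_apply, Prod.mk.eta, ← sub_smul, ← mul_smul,
    mul_smul_comm, smul_mul_assoc, mul_assoc]
  congr 3
  ring

end

theorem lcst_spatial_derivative_general [CompleteSpace A]
    (et i3 : A) (hi3 : i3 * i3 = -1)
    (a b d : ℝ)
    (k : Fin 3) (f fk : ST31 → A) (hf : Integrable f) (hfk : Integrable fk)
    (hxf : Integrable fun x : ST31 => x.2 k • f x)
    (hderiv : ∀ x : ST31,
      HasDerivAt (fun s => f (x.1, Function.update x.2 k s)) (fk x) (x.2 k))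
    (hdecay : ∀ t : ℝ, ∀ v : Sp3,
      Tendsto (fun s => f (t, Function.update v k s)) atTop (nhds 0) ∧
      Tendsto (fun s => f (t, Function.update v k s)) atBot (nhds 0)) :
    ∀ w : ST31,
      LCST et i3 a b d fk w =
        (w.2 k • LCST et i3 a b d f w -
            a • LCST et i3 a b d (fun x => x.2 k • f x) w) * (b⁻¹ • i3) := by
  intro w
  set g : ST31 → A := a • (fun x : ST31 => x.2 k • f x) - w.2 k • f
  have hIg : Integrable (lcstIntegrand et i3 a b d g w) :=
    integrable_lcstIntegrand et i3 a b d ((hxf.smul a).sub (hf.smul _)) w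
  have hIfk := integrable_lcstIntegrand et i3 a b d hfk w
  have hzero : ∫ x, (lcstIntegrand et i3 a b d fk w x +
      lcstIntegrand et i3 a b d g w x * (b⁻¹ • i3)) = 0 := by
    have hI := hIfk.add (hIg.mul_const (b⁻¹ • i3))
    rw [Measure.volume_eq_prod] at hI ⊢
    exact integral_prod_eq_zero_of_hasDerivAt_update k (φ := lcstIntegrand et i3 a b d f w) hI
      (fun x => hasDerivAt_lcstIntegrand_update et i3 a b d hi3 w x k (hderiv x))
      (fun t v => tendsto_lcstIntegrand_update et i3 a b d w t v k (hdecay t v).2)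
      (fun t v => tendsto_lcstIntegrand_update et i3 a b d w t v k (hdecay t v).1)
  rw [integral_add hIfk (hIg.mul_const _), integral_mul_const_of_integrable hIg,
    ← LCST_eq_integral, ← LCST_eq_integral, LCST_sub et i3 a b d (hxf.smul a) (hf.smul _),
    LCST_smul, LCST_smul] at hzero
  rw [eq_neg_of_add_eq_zero_left hzero, ← neg_mul, neg_sub]

/-- spatial-derivative property of the LCST: for k ∈ {1,2,3},
L_A[∂f/∂x_k](w) = [w_k L_A[f](w) − a L_A[x_k f(x)](w)] (i₃/b). -/
theorem lcst_spatial_derivative [CompleteSpace A]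
    (et i3 : A) (het : et * et = -1) (hi3 : i3 * i3 = -1) (hcomm : et * i3 = i3 * et)
    (a b c d : ℝ) (hA : a * d - b * c = 1) (hb : b ≠ 0)
    (k : Fin 3) (f fk : ST31 → A) (hf : Integrable f) (hfk : Integrable fk)
    (hxf : Integrable fun x : ST31 => x.2 k • f x)
    (hderiv : ∀ x : ST31,
      HasDerivAt (fun s => f (x.1, Function.update x.2 k s)) (fk x) (x.2 k))
    (hdecay : ∀ t : ℝ, ∀ v : Sp3,
      Tendsto (fun s => f (t, Function.update v k s)) atTop (nhds 0) ∧
      Tendsto (fun s => f (t, Function.update v k s)) atBot (nhds 0)) :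
    ∀ w : ST31,
      LCST et i3 a b d fk w =
        (w.2 k • LCST et i3 a b d f w -
            a • LCST et i3 a b d (fun x => x.2 k • f x) w) * (b⁻¹ • i3) :=
  lcst_spatial_derivative_general et i3 hi3 a b d k f fk hf hfk hxf hderiv hdecay
end
end
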